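/- arXiv:2002.09769 — 8 statements merged into one kernel-verified Lean document; each statement's English description precedes it below -/
import Mathlib

section
/- Fix γ ∈ [0,1] and define g : ℝ → ℝ by g(z) = sign(z)·|z|^γ. Then for all z₀, z₁ ∈ ℝ, |g(z₁) − g(z₀)| ≤ 2^(1-γ)·|z₁ − z₀|^γ. -/
-- subadditivity of x ↦ x^γ on [0,∞) for γ ∈ [0,1]
lemma sph_subadd {γ : ℝ} (hγ0 : 0 ≤ γ) (hγ1 : γ ≤ 1) {a b : ℝ} (ha : 0 ≤ a) (hb : 0 ≤ b) :
    (a + b) ^ γ ≤ a ^ γ + b ^ γ := by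
  have := NNReal.rpow_add_le_add_rpow ⟨a, ha⟩ ⟨b, hb⟩ hγ0 hγ1
  exact_mod_cast this

-- |a^γ - b^γ| ≤ |a-b|^γ for a,b ≥ 0
lemma sph_holder {γ : ℝ} (hγ0 : 0 ≤ γ) (hγ1 : γ ≤ 1) {a b : ℝ} (ha : 0 ≤ a) (hb : 0 ≤ b) :
    |a ^ γ - b ^ γ| ≤ |a - b| ^ γ := by
  wlog hab : b ≤ a generalizing a b
  · rw [abs_sub_comm, abs_sub_comm a b]; exact this hb ha (le_of_not_ge hab)
  rw [abs_of_nonneg (sub_nonneg.2 (Real.rpow_le_rpow hb hab hγ0)),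
    abs_of_nonneg (by linarith : (0:ℝ) ≤ a - b)]
  have : a ^ γ ≤ (a - b) ^ γ + b ^ γ := by
    have := sph_subadd hγ0 hγ1 (sub_nonneg.2 hab) hb
    simpa using this
  linarith

-- power mean: a^γ + b^γ ≤ 2^(1-γ) (a+b)^γ
lemma sph_pm {γ : ℝ} (hγ0 : 0 ≤ γ) (hγ1 : γ ≤ 1) {a b : ℝ} (ha : 0 ≤ a) (hb : 0 ≤ b) :
    a ^ γ + b ^ γ ≤ 2 ^ (1 - γ) * (a + b) ^ γ := by
  have hc := (Real.concaveOn_rpow hγ0 hγ1).2 (Set.mem_Ici.2 ha) (Set.mem_Ici.2 hb)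
      (by norm_num : (0:ℝ) ≤ 1/2) (by norm_num : (0:ℝ) ≤ 1/2) (by norm_num)
  simp only [smul_eq_mul] at hc
  -- hc : (1/2) * a^γ + (1/2) * b^γ ≤ (1/2*a + 1/2*b)^γ
  have h2 : ((1:ℝ)/2 * a + 1/2 * b) ^ γ = (2:ℝ) ^ (-γ) * (a + b) ^ γ := by
    have : (1:ℝ)/2 * a + 1/2 * b = 2⁻¹ * (a + b) := by ring
    rw [this, Real.mul_rpow (by norm_num) (by linarith),
      Real.inv_rpow (by norm_num), ← Real.rpow_neg (by norm_num)]
  rw [h2] at hc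
  have h3 : (2:ℝ) ^ (1 - γ) = 2 * 2 ^ (-γ) := by
    rw [show (1:ℝ) - γ = 1 + (-γ) by ring, Real.rpow_add (by norm_num), Real.rpow_one]
  rw [h3]
  nlinarith [hc]

theorem signed_power_holder (γ : ℝ) (hγ0 : 0 ≤ γ) (hγ1 : γ ≤ 1)
    (g : ℝ → ℝ) (hg : ∀ z, g z = (if 0 ≤ z then (1 : ℝ) else -1) * |z| ^ γ)
    (z₀ z₁ : ℝ) :
    |g z₁ - g z₀| ≤ 2 ^ (1 - γ) * |z₁ - z₀| ^ γ := by
  have h2 : (1:ℝ) ≤ 2 ^ (1 - γ) :=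
    Real.one_le_rpow (by norm_num) (by linarith)
  have habs : ∀ a b : ℝ, 0 ≤ a → 0 ≤ b →
      |a ^ γ - b ^ γ| ≤ 2 ^ (1 - γ) * |a - b| ^ γ := by
    intro a b ha hb
    calc |a ^ γ - b ^ γ| ≤ |a - b| ^ γ := sph_holder hγ0 hγ1 ha hb
      _ = 1 * |a - b| ^ γ := (one_mul _).symm
      _ ≤ 2 ^ (1 - γ) * |a - b| ^ γ :=
        mul_le_mul_of_nonneg_right h2 (Real.rpow_nonneg (abs_nonneg _) _)
  rw [hg, hg]
  by_cases h1 : 0 ≤ z₁ <;> by_cases h0 : 0 ≤ z₀ <;>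
    simp only [h1, h0, if_pos, if_neg, if_true, if_false, one_mul, neg_one_mul]
  · rw [abs_of_nonneg h1, abs_of_nonneg h0]
    exact habs z₁ z₀ h1 h0
  · push_neg at h0
    rw [abs_of_nonneg h1, abs_of_neg h0, sub_neg_eq_add]
    have key := sph_pm hγ0 hγ1 h1 (by linarith : (0:ℝ) ≤ -z₀)
    have hz : z₁ + -z₀ = |z₁ - z₀| := by
      rw [abs_of_nonneg (by linarith)]; ring
    rw [hz] at key
    calc |z₁ ^ γ + (-z₀) ^ γ| = z₁ ^ γ + (-z₀) ^ γ := by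
          rw [abs_of_nonneg (add_nonneg (Real.rpow_nonneg h1 _)
            (Real.rpow_nonneg (by linarith) _))]
      _ ≤ 2 ^ (1 - γ) * |z₁ - z₀| ^ γ := key
  · push_neg at h1
    rw [abs_of_neg h1, abs_of_nonneg h0]
    have key := sph_pm hγ0 hγ1 h0 (by linarith : (0:ℝ) ≤ -z₁)
    have hz : z₀ + -z₁ = |z₁ - z₀| := by
      rw [abs_sub_comm, abs_of_nonneg (by linarith)]; ring
    rw [hz] at key
    calc |-(-z₁) ^ γ - z₀ ^ γ| = z₀ ^ γ + (-z₁) ^ γ := by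
          rw [show -(-z₁) ^ γ - z₀ ^ γ = -(z₀ ^ γ + (-z₁) ^ γ) by ring, abs_neg,
            abs_of_nonneg (add_nonneg (Real.rpow_nonneg h0 _)
            (Real.rpow_nonneg (by linarith) _))]
      _ ≤ 2 ^ (1 - γ) * |z₁ - z₀| ^ γ := key
  · push_neg at h1 h0
    rw [abs_of_neg h1, abs_of_neg h0]
    have : |-(-z₁) ^ γ - -(-z₀) ^ γ| = |(-z₁) ^ γ - (-z₀) ^ γ| := by
      rw [show -(-z₁) ^ γ - -(-z₀) ^ γ = -((-z₁) ^ γ - (-z₀) ^ γ) by ring, abs_neg]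
    rw [this]
    have := habs (-z₁) (-z₀) (by linarith) (by linarith)
    rwa [show -z₁ - -z₀ = -(z₁ - z₀) by ring, abs_neg] at this
end

section
/- Let λ > 0, θ ∈ [0,1], and suppose L : V × Y → [0,∞) is a loss such that for every u ∈ V, y ∈ Y there is a non-negative differentiable φ_{u,y} : ℝ → [0,∞) with: (1) φ_{u,y}(0) = L(u,y); (2) for all t > 0, sup over v with ‖u−v‖ ≤ t of L(v,y) is at most φ_{u,y}(t); (3) φ_{u,y}' ≥ 0 on [0,∞); (4) |φ_{u,y}'(t₁) − φ_{u,y}'(t₀)| ≤ (λ/2)^{1/(1−θ)}·|t₁ − t₀|^{θ/(1−θ)} for all t₀, t₁ ∈ ℝ. Then L is (λ,θ)-self-bounding Lipschitz: |L(u,y) − L(v,y)| ≤ λ·max{L(u,y), L(v,y)}^θ·‖u−v‖ for all u, v ∈ V, y ∈ Y. -/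
/-!
A non-negative function whose derivative is `θ/(1-θ)`-Hölder with constant `(λ/2)^(1/(1-θ))`
satisfies `f' ≤ λ f^θ`: if the slope at `x` were large, it would stay large on an interval to the
left of `x` whose length is dictated by the Hölder bound, and `f` would turn negative there.

For `L u y ≤ L v y` and `t = ‖u - v‖`, continuity gives `L v y ≤ φ t`, so the monotone function
`φ = φ u y` reaches the value `L v y` at some `s ≤ t`. On `[0, s]` the slope of `φ` is at most
`λ φ^θ ≤ λ (L v y)^θ`, and the mean value inequality gives `L v y - L u y ≤ λ (L v y)^θ s`.
-/

open Set Filter Topology Real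

theorem deriv_sub_mul_le_of_holder {f : ℝ → ℝ} (hf : Differentiable ℝ f) (hf0 : ∀ s, 0 ≤ f s)
    {H α : ℝ} (hH : 0 ≤ H) (hα : 0 ≤ α)
    (hhol : ∀ a b, |deriv f b - deriv f a| ≤ H * |b - a| ^ α) (x : ℝ) {r : ℝ} (hr : 0 ≤ r) :
    (deriv f x - H * r ^ α) * r ≤ f x := by
  have hslope : ∀ s ∈ interior (Icc (x - r) x), deriv f x - H * r ^ α ≤ deriv f s := by
    intro s hs
    rw [interior_Icc] at hs
    have hdist : |x - s| ≤ r := abs_le.mpr ⟨by linarith [hs.2], by linarith [hs.1]⟩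
    have hdrop : deriv f x - deriv f s ≤ H * r ^ α :=
      (le_abs_self _).trans <| (hhol s x).trans <|
        mul_le_mul_of_nonneg_left (rpow_le_rpow (abs_nonneg _) hdist hα) hH
    linarith
  have hmvt := (convex_Icc (x - r) x).mul_sub_le_image_sub_of_le_deriv
    hf.continuous.continuousOn hf.differentiableOn hslope (x - r)
    (left_mem_Icc.mpr (by linarith)) x (right_mem_Icc.mpr (by linarith)) (by linarith)
  rw [sub_sub_cancel] at hmvt
  linarith [hf0 (x - r)]

theorem deriv_le_mul_rpow_of_holder {f : ℝ → ℝ} (hf : Differentiable ℝ f) (hf0 : ∀ s, 0 ≤ f s)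
    {lam θ : ℝ} (hlam : 0 < lam) (hθ0 : 0 ≤ θ) (hθ1 : θ < 1)
    (hhol : ∀ a b, |deriv f b - deriv f a| ≤
      (lam / 2) ^ ((1 : ℝ) / (1 - θ)) * |b - a| ^ (θ / (1 - θ)))
    (x : ℝ) : deriv f x ≤ lam * f x ^ θ := by
  rcases (hf0 x).eq_or_lt with hx | hx
  · have hmin : IsLocalMin f x := Eventually.of_forall fun s => hx ▸ hf0 s
    rw [hmin.deriv_eq_zero]
    exact mul_nonneg hlam.le (rpow_nonneg (hf0 x) θ)
  set c := lam / 2 with hc_def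
  have hc : 0 < c := half_pos hlam
  have h1θ : 1 - θ ≠ 0 := by linarith
  -- the radius at which the Hölder loss `H r^α` equals `c f(x)^θ`
  set r := f x ^ (1 - θ) / c
  have hr : 0 < r := div_pos (rpow_pos_of_pos hx _) hc
  have hloss : c ^ ((1 : ℝ) / (1 - θ)) * r ^ (θ / (1 - θ)) = c * f x ^ θ := by
    rw [div_rpow (rpow_nonneg hx.le _) hc.le, ← rpow_mul hx.le,
      show (1 : ℝ) / (1 - θ) = 1 + θ / (1 - θ) by field_simp; ring, rpow_add hc, rpow_one,
      show (1 - θ) * (θ / (1 - θ)) = θ by field_simp]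
    field_simp
  have hfx : c * f x ^ θ * r = f x := by
    rw [mul_assoc, ← mul_div_assoc, ← rpow_add hx, add_sub_cancel, rpow_one]
    field_simp
  have hslack := deriv_sub_mul_le_of_holder hf hf0 (rpow_nonneg hc.le _)
    (div_nonneg hθ0 (by linarith)) hhol x hr.le
  rw [hloss] at hslack
  have hbound : deriv f x - c * f x ^ θ ≤ c * f x ^ θ :=
    le_of_mul_le_mul_right (hslack.trans hfx.ge) hr
  rw [hc_def] at hbound
  linarith

theorem sub_le_mul_rpow_mul_of_deriv_le {f : ℝ → ℝ} (hf : Differentiable ℝ f)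
    (hf0 : ∀ s, 0 ≤ f s) {lam θ : ℝ} (hlam : 0 ≤ lam) (hθ : 0 ≤ θ)
    (hgrad : ∀ s, deriv f s ≤ lam * f s ^ θ) {t : ℝ} (ht : 0 ≤ t) (hmono : MonotoneOn f (Icc 0 t))
    {b : ℝ} (hb0 : f 0 ≤ b) (hbt : b ≤ f t) :
    b - f 0 ≤ lam * b ^ θ * t := by
  obtain ⟨s, ⟨hs0, hst⟩, rfl⟩ :=
    intermediate_value_Icc ht hf.continuous.continuousOn ⟨hb0, hbt⟩
  have hbound : ∀ x ∈ interior (Icc 0 s), deriv f x ≤ lam * f s ^ θ := by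
    intro x hx
    rw [interior_Icc] at hx
    have hxs : f x ≤ f s :=
      hmono ⟨hx.1.le, by linarith [hx.2]⟩ ⟨hs0, hst⟩ hx.2.le
    exact (hgrad x).trans (mul_le_mul_of_nonneg_left (rpow_le_rpow (hf0 x) hxs hθ) hlam)
  calc f s - f 0 ≤ lam * f s ^ θ * (s - 0) :=
        (convex_Icc 0 s).image_sub_le_mul_sub_of_deriv_le hf.continuous.continuousOn
          hf.differentiableOn hbound 0 (left_mem_Icc.mpr hs0) s (right_mem_Icc.mpr hs0) hs0
    _ ≤ lam * f s ^ θ * t := by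
        rw [sub_zero]
        exact mul_le_mul_of_nonneg_left hst (mul_nonneg hlam (rpow_nonneg (hf0 s) θ))

theorem sufficient_condition_self_bounding_lipschitz_general
    {V : Type*} [SeminormedAddCommGroup V] {Y : Type*}
    (L : V → Y → ℝ)
    (lam θ : ℝ) (hlam : 0 < lam) (hθ0 : 0 ≤ θ) (hθ1 : θ < 1)
    (φ : V → Y → ℝ → ℝ)
    (hφnonneg : ∀ u y t, 0 ≤ φ u y t)
    (hφdiff : ∀ u y, Differentiable ℝ (φ u y))
    (h1 : ∀ u y, φ u y 0 = L u y)
    (h2 : ∀ (u : V) (y : Y) (t : ℝ), 0 < t → ∀ v : V, ‖u - v‖ ≤ t → L v y ≤ φ u y t)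
    (h3 : ∀ (u : V) (y : Y) (t : ℝ), 0 ≤ t → 0 ≤ deriv (φ u y) t)
    (h4 : ∀ (u : V) (y : Y) (t₀ t₁ : ℝ),
      |deriv (φ u y) t₁ - deriv (φ u y) t₀| ≤
        (lam / 2) ^ ((1 : ℝ) / (1 - θ)) * |t₁ - t₀| ^ (θ / (1 - θ))) :
    ∀ (u v : V) (y : Y),
      |L u y - L v y| ≤ lam * max (L u y) (L v y) ^ θ * ‖u - v‖ := by
  intro u v y
  have key : ∀ u v : V, L u y ≤ L v y → L v y - L u y ≤ lam * L v y ^ θ * ‖u - v‖ := by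
    intro u v huv
    have hdiff := hφdiff u y
    have hmono : MonotoneOn (φ u y) (Ici 0) :=
      monotoneOn_of_deriv_nonneg (convex_Ici 0) hdiff.continuous.continuousOn
        hdiff.differentiableOn (by simpa using fun t ht => h3 u y t (le_of_lt ht))
    have hvt : L v y ≤ φ u y ‖u - v‖ :=
      ge_of_tendsto (hdiff.continuous.continuousWithinAt (s := Ioi ‖u - v‖))
        (eventually_nhdsWithin_of_forall fun t ht =>
          h2 u y t ((norm_nonneg _).trans_lt ht) v (le_of_lt ht))
    rw [← h1 u y] at huv ⊢
    exact sub_le_mul_rpow_mul_of_deriv_le hdiff (hφnonneg u y) hlam.le hθ0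
      (deriv_le_mul_rpow_of_holder hdiff (hφnonneg u y) hlam hθ0 hθ1 (h4 u y))
      (norm_nonneg _) (hmono.mono Icc_subset_Ici_self) huv hvt
  rcases le_total (L u y) (L v y) with h | h
  · rw [abs_sub_comm, abs_of_nonneg (sub_nonneg.mpr h), max_eq_right h]
    exact key u v h
  · rw [abs_of_nonneg (sub_nonneg.mpr h), max_eq_left h, norm_sub_rev]
    exact key v u h

theorem sufficient_condition_self_bounding_lipschitz
    {V : Type*} [SeminormedAddCommGroup V] {Y : Type*}
    (L : V → Y → ℝ) (hLnonneg : ∀ u y, 0 ≤ L u y)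
    (lam θ : ℝ) (hlam : 0 < lam) (hθ0 : 0 ≤ θ) (hθ1 : θ < 1)
    (φ : V → Y → ℝ → ℝ)
    (hφnonneg : ∀ u y t, 0 ≤ φ u y t)
    (hφdiff : ∀ u y, Differentiable ℝ (φ u y))
    (h1 : ∀ u y, φ u y 0 = L u y)
    (h2 : ∀ (u : V) (y : Y) (t : ℝ), 0 < t → ∀ v : V, ‖u - v‖ ≤ t → L v y ≤ φ u y t)
    (h3 : ∀ (u : V) (y : Y) (t : ℝ), 0 ≤ t → 0 ≤ deriv (φ u y) t)
    (h4 : ∀ (u : V) (y : Y) (t₀ t₁ : ℝ),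
      |deriv (φ u y) t₁ - deriv (φ u y) t₀| ≤
        (lam / 2) ^ ((1 : ℝ) / (1 - θ)) * |t₁ - t₀| ^ (θ / (1 - θ))) :
    ∀ (u v : V) (y : Y),
      |L u y - L v y| ≤ lam * max (L u y) (L v y) ^ θ * ‖u - v‖ :=
  sufficient_condition_self_bounding_lipschitz_general L lam θ hlam hθ0 hθ1 φ hφnonneg hφdiff h1 h2
    h3 h4
end

section
/- The multinomial logistic (softmax) loss L(u,y) = log(∑_{j=1}^{q} exp(u_j − u_y)) on ℝ^q × [q] is (2, 1/2)-self-bounding Lipschitz with respect to the sup-norm: for all u, v ∈ ℝ^q and y ∈ [q], |L(u,y) − L(v,y)| ≤ 2·max{L(u,y), L(v,y)}^{1/2}·‖u − v‖_∞. -/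
private lemma softmax_key (q : ℕ) (u v : Fin q → ℝ) (y : Fin q) :
    Real.log (∑ j, Real.exp (u j - u y)) - Real.log (∑ j, Real.exp (v j - v y)) ≤
      2 * Real.sqrt (Real.log (∑ j, Real.exp (u j - u y))) * ‖u - v‖ := by
  set S := ∑ j, Real.exp (u j - u y) with hSdef
  set Sv := ∑ j, Real.exp (v j - v y) with hSvdef
  set d := ‖u - v‖ with hddef
  have hd0 : 0 ≤ d := norm_nonneg _
  have hab : ∀ j, (u j - u y) - (v j - v y) ≤ 2 * d := by
    intro j
    have h1 : |u j - v j| ≤ d := by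
      have := norm_le_pi_norm (u - v) j
      simpa [Real.norm_eq_abs] using this
    have h2 : |u y - v y| ≤ d := by
      have := norm_le_pi_norm (u - v) y
      simpa [Real.norm_eq_abs] using this
    obtain ⟨ha, hb⟩ := abs_le.1 h1
    obtain ⟨hc, he⟩ := abs_le.1 h2
    linarith
  have hS1 : 1 ≤ S := by
    have h := Finset.single_le_sum (f := fun j => Real.exp (u j - u y))
      (fun i _ => (Real.exp_pos _).le) (Finset.mem_univ y)
    simpa using h
  have hS0 : (0 : ℝ) < S := lt_of_lt_of_le one_pos hS1
  have hSv0 : (0 : ℝ) < Sv :=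
    Finset.sum_pos (fun i _ => Real.exp_pos _) ⟨y, Finset.mem_univ y⟩
  clear_value d
  obtain ⟨T, hST⟩ : ∃ T : ℝ, S * T = ∑ j, Real.exp (u j - u y) * ((u j - u y) - (v j - v y)) :=
    ⟨(∑ j, Real.exp (u j - u y) * ((u j - u y) - (v j - v y))) / S,
      mul_div_cancel₀ _ (ne_of_gt hS0)⟩
  -- Step A : log S - log Sv ≤ T
  have hA : Real.exp (-T) * S ≤ Sv := by
    have key : ∑ j, Real.exp (u j - u y) * (1 + ((v j - v y) - (u j - u y) + T)) = S := by
      have expand : ∀ j : Fin q, Real.exp (u j - u y) * (1 + ((v j - v y) - (u j - u y) + T))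
          = Real.exp (u j - u y) + T * Real.exp (u j - u y)
            - Real.exp (u j - u y) * ((u j - u y) - (v j - v y)) := by
        intro j; ring
      rw [Finset.sum_congr rfl (fun j _ => expand j), Finset.sum_sub_distrib,
        Finset.sum_add_distrib, ← Finset.mul_sum, ← hST, ← hSdef]
      ring
    have h1 : ∀ j : Fin q,
        Real.exp (-T) * (Real.exp (u j - u y) * (1 + ((v j - v y) - (u j - u y) + T)))
          ≤ Real.exp (v j - v y) := by
      intro j
      have h2 := Real.add_one_le_exp ((v j - v y) - (u j - u y) + T)
      calc Real.exp (-T) * (Real.exp (u j - u y) * (1 + ((v j - v y) - (u j - u y) + T)))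
          ≤ Real.exp (-T) * (Real.exp (u j - u y) * Real.exp ((v j - v y) - (u j - u y) + T)) := by
            apply mul_le_mul_of_nonneg_left _ (Real.exp_pos _).le
            apply mul_le_mul_of_nonneg_left _ (Real.exp_pos _).le
            linarith
        _ = Real.exp (v j - v y) := by
            rw [← Real.exp_add, ← Real.exp_add]; congr 1; ring
    calc Real.exp (-T) * S
        = ∑ j, Real.exp (-T) * (Real.exp (u j - u y) * (1 + ((v j - v y) - (u j - u y) + T))) := by
          rw [← key, Finset.mul_sum]
      _ ≤ Sv := Finset.sum_le_sum (fun j _ => h1 j)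
  have hA' : Real.log S - Real.log Sv ≤ T := by
    have := Real.log_le_log (by positivity) hA
    rw [Real.log_mul (by positivity) (ne_of_gt hS0), Real.log_exp] at this
    linarith
  -- Step B : T ≤ 2 * d * (1 - 1/S)
  have hB : T ≤ 2 * d * (1 - 1 / S) := by
    have hy0 : Real.exp (u y - u y) * ((u y - u y) - (v y - v y)) = 0 := by simp
    have herase : ∑ j ∈ Finset.univ.erase y,
        Real.exp (u j - u y) * ((u j - u y) - (v j - v y))
        = ∑ j, Real.exp (u j - u y) * ((u j - u y) - (v j - v y)) :=
      Finset.sum_erase _ hy0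
    have h4 : ∑ j ∈ Finset.univ.erase y,
        Real.exp (u j - u y) * ((u j - u y) - (v j - v y))
        ≤ ∑ j ∈ Finset.univ.erase y, Real.exp (u j - u y) * (2 * d) :=
      Finset.sum_le_sum (fun j _ => mul_le_mul_of_nonneg_left (hab j) (Real.exp_pos _).le)
    have h5 : ∑ j ∈ Finset.univ.erase y, Real.exp (u j - u y) * (2 * d)
        = 2 * d * (S - 1) := by
      rw [← Finset.sum_mul, Finset.sum_erase_eq_sub (Finset.mem_univ y), ← hSdef]
      simp [sub_self]
      ring
    have h6 : S * T ≤ 2 * d * (S - 1) := by rw [hST, ← herase]; linarith [h4, h5.symm.le]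
    have h7 : T = S * T / S := by field_simp
    rw [h7]
    rw [div_le_iff₀ hS0]
    have : 2 * d * (1 - 1 / S) * S = 2 * d * (S - 1) := by field_simp
    rw [this]
    exact h6
  -- Step C : 1 - 1/S ≤ sqrt (log S)
  have hM0 : 0 ≤ Real.log S := Real.log_nonneg hS1
  have hC : 1 - 1 / S ≤ Real.sqrt (Real.log S) := by
    have h1 : 1 - 1 / S ≤ Real.log S := by
      have h := Real.log_le_sub_one_of_pos (inv_pos.2 hS0)
      rw [Real.log_inv] at h
      rw [one_div]
      linarith
    have h2 : 1 - 1 / S ≤ 1 := by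
      have : 0 ≤ 1 / S := by positivity
      linarith
    rcases le_total (Real.log S) 1 with h | h
    · have : Real.log S ≤ Real.sqrt (Real.log S) := by
        have hmm : Real.log S * Real.log S ≤ Real.log S := by nlinarith
        calc Real.log S = Real.sqrt (Real.log S * Real.log S) := (Real.sqrt_mul_self hM0).symm
          _ ≤ Real.sqrt (Real.log S) := Real.sqrt_le_sqrt hmm
      linarith
    · have : (1:ℝ) ≤ Real.sqrt (Real.log S) := by
        rw [show (1:ℝ) = Real.sqrt 1 from (Real.sqrt_one).symm]
        exact Real.sqrt_le_sqrt h
      linarith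
  calc Real.log S - Real.log Sv ≤ T := hA'
    _ ≤ 2 * d * (1 - 1 / S) := hB
    _ ≤ 2 * d * Real.sqrt (Real.log S) := mul_le_mul_of_nonneg_left hC (by positivity)
    _ = 2 * Real.sqrt (Real.log S) * d := by ring

theorem multinomial_logistic_self_bounding_lipschitz
    (q : ℕ) (hq : 0 < q)
    (L : (Fin q → ℝ) → Fin q → ℝ)
    (hL : ∀ u y, L u y = Real.log (∑ j, Real.exp (u j - u y)))
    (u v : Fin q → ℝ) (y : Fin q) :
    |L u y - L v y| ≤ 2 * max (L u y) (L v y) ^ ((1 : ℝ) / 2) * ‖u - v‖ := by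
  have h1 := softmax_key q u v y
  have h2 := softmax_key q v u y
  rw [← hL u y, ← hL v y] at h1
  rw [← hL v y, ← hL u y] at h2
  rw [norm_sub_rev] at h2
  have hs1 : Real.sqrt (L u y) ≤ max (L u y) (L v y) ^ ((1 : ℝ) / 2) := by
    rw [show ((1:ℝ)/2) = (1/2 : ℝ) from rfl, ← Real.sqrt_eq_rpow]
    exact Real.sqrt_le_sqrt (le_max_left _ _)
  have hs2 : Real.sqrt (L v y) ≤ max (L u y) (L v y) ^ ((1 : ℝ) / 2) := by
    rw [← Real.sqrt_eq_rpow]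
    exact Real.sqrt_le_sqrt (le_max_right _ _)
  have hd0 : (0:ℝ) ≤ ‖u - v‖ := norm_nonneg _
  rw [abs_sub_le_iff]
  constructor
  · calc L u y - L v y ≤ 2 * Real.sqrt (L u y) * ‖u - v‖ := h1
      _ ≤ 2 * max (L u y) (L v y) ^ ((1 : ℝ) / 2) * ‖u - v‖ := by
        apply mul_le_mul_of_nonneg_right _ hd0
        linarith
  · calc L v y - L u y ≤ 2 * Real.sqrt (L v y) * ‖u - v‖ := h2
      _ ≤ 2 * max (L u y) (L v y) ^ ((1 : ℝ) / 2) * ‖u - v‖ := by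
        apply mul_le_mul_of_nonneg_right _ hd0
        linarith
end

section
/- For κ ∈ [1,2] and γ ∈ [1,2], the sup-norm regression loss L(u,y) = κ·‖u − y‖_∞^γ on ℝ^q × ℝ^q is (λ,θ)-self-bounding Lipschitz with θ = (γ−1)/γ and λ = (8κ)^{1−θ}: for all u, v, y ∈ ℝ^q, |L(u,y) − L(v,y)| ≤ λ·max{L(u,y), L(v,y)}^θ·‖u − v‖_∞. -/
/-!
Write `a = ‖u - y‖`, `b = ‖v - y‖` and `M = max a b`. Convexity of `t ↦ t ^ γ` bounds
`|a ^ γ - b ^ γ|` by `γ M ^ (γ - 1) |a - b|`, and `|a - b| ≤ ‖u - v‖`. Since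
`κ M ^ (γ - 1) = κ ^ (1/γ) (κ M ^ γ) ^ θ` and `κ M ^ γ` is the larger of the two losses, this gives
the inequality with constant `γ κ ^ (1/γ)`, and `γ ≤ 8 ^ (1/γ)` because `γ ^ γ ≤ 4` for `0 < γ ≤ 2`.
-/

open Real

theorem Real.rpow_sub_rpow_le_of_one_le {a b γ : ℝ} (hb : 0 ≤ b) (hba : b ≤ a) (hγ : 1 ≤ γ) :
    a ^ γ - b ^ γ ≤ γ * a ^ (γ - 1) * (a - b) := by
  rcases hba.eq_or_lt with rfl | hlt
  · simp
  have hslope : slope (fun t : ℝ => t ^ γ) b a ≤ γ * a ^ (γ - 1) :=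
    (convexOn_rpow hγ).slope_le_of_hasDerivAt hb (hb.trans hlt.le) hlt
      (hasDerivAt_rpow_const (Or.inr hγ))
  rwa [slope_def_field, div_le_iff₀ (sub_pos.2 hlt)] at hslope

theorem Real.abs_rpow_sub_rpow_le_of_one_le {a b γ : ℝ} (ha : 0 ≤ a) (hb : 0 ≤ b) (hγ : 1 ≤ γ) :
    |a ^ γ - b ^ γ| ≤ γ * max a b ^ (γ - 1) * |a - b| := by
  rcases le_total b a with hba | hab
  · rw [max_eq_left hba, abs_of_nonneg (sub_nonneg.2 hba),
      abs_of_nonneg (sub_nonneg.2 (rpow_le_rpow hb hba (by linarith)))]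
    exact rpow_sub_rpow_le_of_one_le hb hba hγ
  · rw [max_eq_right hab, abs_sub_comm, abs_sub_comm a, abs_of_nonneg (sub_nonneg.2 hab),
      abs_of_nonneg (sub_nonneg.2 (rpow_le_rpow ha hab (by linarith)))]
    exact rpow_sub_rpow_le_of_one_le ha hab hγ

theorem Real.abs_mul_rpow_sub_mul_rpow_le {κ a b γ : ℝ} (hκ : 0 ≤ κ) (ha : 0 ≤ a) (hb : 0 ≤ b)
    (hγ : 1 ≤ γ) :
    |κ * a ^ γ - κ * b ^ γ| ≤
      γ * κ ^ γ⁻¹ * max (κ * a ^ γ) (κ * b ^ γ) ^ ((γ - 1) / γ) * |a - b| := by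
  have hγ0 : 0 < γ := by linarith
  have hM : 0 ≤ max a b := ha.trans (le_max_left a b)
  have hmax :
      max (κ * a ^ γ) (κ * b ^ γ) ^ ((γ - 1) / γ) = κ ^ ((γ - 1) / γ) * max a b ^ (γ - 1) := by
    rw [← mul_max_of_nonneg _ _ hκ, ← rpow_max ha hb hγ0.le, mul_rpow hκ (rpow_nonneg hM γ),
      ← rpow_mul hM, mul_div_cancel₀ _ hγ0.ne']
  have hsum : γ⁻¹ + (γ - 1) / γ = 1 := by field_simp; ring
  have hκ_split : κ ^ γ⁻¹ * κ ^ ((γ - 1) / γ) = κ := by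
    rw [← rpow_add' hκ (by rw [hsum]; norm_num), hsum, rpow_one]
  calc |κ * a ^ γ - κ * b ^ γ| = κ * |a ^ γ - b ^ γ| := by
        rw [← mul_sub, abs_mul, abs_of_nonneg hκ]
    _ ≤ κ * (γ * max a b ^ (γ - 1) * |a - b|) := by
        gcongr; exact abs_rpow_sub_rpow_le_of_one_le ha hb hγ
    _ = γ * (κ ^ γ⁻¹ * κ ^ ((γ - 1) / γ)) * max a b ^ (γ - 1) * |a - b| := by
        rw [hκ_split]; ring
    _ = γ * κ ^ γ⁻¹ * max (κ * a ^ γ) (κ * b ^ γ) ^ ((γ - 1) / γ) * |a - b| := by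
        rw [hmax]; ring

theorem abs_mul_rpow_norm_sub_sub_mul_rpow_norm_sub_le {E : Type*} [SeminormedAddCommGroup E]
    {κ γ : ℝ} (hκ : 0 ≤ κ) (hγ : 1 ≤ γ) (u v y : E) :
    |κ * ‖u - y‖ ^ γ - κ * ‖v - y‖ ^ γ| ≤
      γ * κ ^ γ⁻¹ * max (κ * ‖u - y‖ ^ γ) (κ * ‖v - y‖ ^ γ) ^ ((γ - 1) / γ) * ‖u - v‖ := by
  refine (abs_mul_rpow_sub_mul_rpow_le hκ (norm_nonneg _) (norm_nonneg _) hγ).trans ?_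
  gcongr
  simpa using abs_norm_sub_norm_le (u - y) (v - y)

theorem Real.le_eight_rpow_inv {γ : ℝ} (hγ0 : 0 < γ) (hγ2 : γ ≤ 2) : γ ≤ 8 ^ γ⁻¹ := by
  rw [le_rpow_inv_iff_of_pos hγ0.le (by norm_num) hγ0]
  calc γ ^ γ ≤ 2 ^ γ := rpow_le_rpow hγ0.le hγ2 hγ0.le
    _ ≤ 2 ^ (2 : ℝ) := rpow_le_rpow_of_exponent_le (by norm_num) hγ2
    _ ≤ 8 := by norm_num

theorem sup_norm_regression_loss_self_bounding_lipschitz_general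
    (q : ℕ) (κ γ : ℝ) (hκ1 : 1 ≤ κ) (hγ1 : 1 ≤ γ) (hγ2 : γ ≤ 2)
    (L : (Fin q → ℝ) → (Fin q → ℝ) → ℝ)
    (hL : ∀ u y, L u y = κ * ‖u - y‖ ^ γ)
    (θ lam : ℝ) (hθ : θ = (γ - 1) / γ) (hlam : lam = (8 * κ) ^ (1 - θ))
    (u v y : Fin q → ℝ) :
    |L u y - L v y| ≤ lam * max (L u y) (L v y) ^ θ * ‖u - v‖ := by
  subst hθ hlam
  have hexp : 1 - (γ - 1) / γ = γ⁻¹ := by field_simp; ring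
  simp only [hL]
  refine (abs_mul_rpow_norm_sub_sub_mul_rpow_norm_sub_le (by linarith) hγ1 u v y).trans ?_
  rw [hexp, mul_rpow (by norm_num) (by linarith)]
  gcongr
  exact le_eight_rpow_inv (by linarith) hγ2

theorem sup_norm_regression_loss_self_bounding_lipschitz
    (q : ℕ) (hq : 0 < q) (κ γ : ℝ) (hκ1 : 1 ≤ κ) (hκ2 : κ ≤ 2) (hγ1 : 1 ≤ γ) (hγ2 : γ ≤ 2)
    (L : (Fin q → ℝ) → (Fin q → ℝ) → ℝ)
    (hL : ∀ u y, L u y = κ * ‖u - y‖ ^ γ)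
    (θ lam : ℝ) (hθ : θ = (γ - 1) / γ) (hlam : lam = (8 * κ) ^ (1 - θ))
    (u v y : Fin q → ℝ) :
    |L u y - L v y| ≤ lam * max (L u y) (L v y) ^ θ * ‖u - v‖ :=
  sup_norm_regression_loss_self_bounding_lipschitz_general q κ γ hκ1 hγ1 hγ2 L hL θ lam hθ hlam u v
    y
end

section
/- The bounded exponential loss L(u,y) = min{1, exp(−u·y)} on ℝ × {−1,+1} is (1,θ)-self-bounding Lipschitz for every θ ∈ [0,1]: for all u, v ∈ ℝ and y ∈ {−1,+1}, |L(u,y) − L(v,y)| ≤ max{L(u,y), L(v,y)}^θ·|u − v|. -/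
lemma exp_loss_key (θ : ℝ) (hθ1 : θ ≤ 1) (a b : ℝ) (hab : a ≤ b) :
    min 1 (Real.exp (-a)) - min 1 (Real.exp (-b)) ≤
      (min 1 (Real.exp (-a))) ^ θ * (b - a) := by
  rcases le_or_gt b 0 with hb | hb
  · have ha : a ≤ 0 := hab.trans hb
    have h1 : (1:ℝ) ≤ Real.exp (-a) := Real.one_le_exp (by linarith)
    have h2 : (1:ℝ) ≤ Real.exp (-b) := Real.one_le_exp (by linarith)
    rw [min_eq_left h1, min_eq_left h2, Real.one_rpow]
    linarith
  · rcases le_or_gt a 0 with ha | ha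
    · have h1 : (1:ℝ) ≤ Real.exp (-a) := Real.one_le_exp (by linarith)
      have h2 : Real.exp (-b) ≤ 1 := Real.exp_le_one_iff.mpr (by linarith)
      rw [min_eq_left h1, min_eq_right h2, Real.one_rpow]
      have := Real.add_one_le_exp (-b)
      linarith
    · have h1 : Real.exp (-a) ≤ 1 := Real.exp_le_one_iff.mpr (by linarith)
      have h2 : Real.exp (-b) ≤ 1 := Real.exp_le_one_iff.mpr (by linarith)
      rw [min_eq_right h1, min_eq_right h2]
      have hstep : Real.exp (-a) - Real.exp (-b) ≤ Real.exp (-a) * (b - a) := by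
        have h3 := Real.add_one_le_exp (a - b)
        have h4 : Real.exp (-b) = Real.exp (-a) * Real.exp (a - b) := by
          rw [← Real.exp_add]; ring_nf
        have h5 : Real.exp (-a) * (a - b + 1) ≤ Real.exp (-b) := by
          rw [h4]
          exact mul_le_mul_of_nonneg_left h3 (Real.exp_nonneg _)
        nlinarith
      have hpow : Real.exp (-a) ≤ Real.exp (-a) ^ θ := by
        calc Real.exp (-a) = Real.exp (-a) ^ (1:ℝ) := (Real.rpow_one _).symm
          _ ≤ Real.exp (-a) ^ θ :=
            Real.rpow_le_rpow_of_exponent_ge (Real.exp_pos _) h1 hθ1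
      calc Real.exp (-a) - Real.exp (-b) ≤ Real.exp (-a) * (b - a) := hstep
        _ ≤ Real.exp (-a) ^ θ * (b - a) :=
          mul_le_mul_of_nonneg_right hpow (by linarith)

theorem bounded_exp_loss_self_bounding_lipschitz
    (L : ℝ → ℝ → ℝ) (hL : ∀ u y, L u y = min 1 (Real.exp (-(u * y))))
    (θ : ℝ) (hθ0 : 0 ≤ θ) (hθ1 : θ ≤ 1)
    (u v : ℝ) (y : ℝ) (hy : y = -1 ∨ y = 1) :
    |L u y - L v y| ≤ max (L u y) (L v y) ^ θ * |u - v| := by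
  set a := u * y with hadef
  set b := v * y with hbdef
  have hLu : L u y = min 1 (Real.exp (-a)) := hL u y
  have hLv : L v y = min 1 (Real.exp (-b)) := hL v y
  have hdist : |u - v| = |a - b| := by
    rcases hy with h | h <;> simp [hadef, hbdef, h] <;> rw [← abs_neg] <;> ring_nf
  rw [hLu, hLv, hdist]
  have mono : ∀ s t : ℝ, s ≤ t →
      min 1 (Real.exp (-t)) ≤ min 1 (Real.exp (-s)) := by
    intro s t hst
    exact min_le_min le_rfl (Real.exp_le_exp.mpr (by linarith))
  rcases le_total a b with hab | hab
  · have hle := mono a b hab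
    rw [max_eq_left hle, abs_of_nonneg (by linarith), abs_of_nonpos (by linarith)]
    have := exp_loss_key θ hθ1 a b hab
    linarith [this, (by ring : -(a - b) = b - a)]
  · have hle := mono b a hab
    rw [max_eq_right hle, abs_of_nonpos (by linarith), abs_of_nonneg (by linarith)]
    have := exp_loss_key θ hθ1 b a hab
    linarith
end

section
/- (Massart's finite class lemma) Let A ⊆ ℝ^m be a finite set. Then E_σ[ sup_{a ∈ A} (1/m)·∑_{i=1}^{m} σ_i·a_i ] ≤ (max_{a ∈ A} ‖a‖₂)·√(2·log|A|)/m, where σ₁,…,σ_m are independent Rademacher random variables taking values ±1 with probability 1/2 each. -/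
open Finset Real

lemma sum_prod_bool (m : ℕ) (g : Fin m → Bool → ℝ) :
    ∑ σ : Fin m → Bool, ∏ i, g i (σ i) = ∏ i, (g i true + g i false) := by
  rw [← Fintype.piFinset_univ, Finset.sum_prod_piFinset]
  congr 1; ext i; simp

lemma sgn_sum_zero (m : ℕ) (i : Fin m) :
    ∑ σ : Fin m → Bool, (if σ i then (1:ℝ) else -1) = 0 := by
  have h1 : ∀ σ : Fin m → Bool, (if σ i then (1:ℝ) else -1)
      = ∏ j, (if j = i then (if σ j then (1:ℝ) else -1) else 1) := by
    intro σ
    rw [Finset.prod_eq_single i (by intro b _ hb; simp [hb]) (by simp)]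
    simp
  simp_rw [h1]
  rw [sum_prod_bool m (fun j b => if j = i then (if b then (1:ℝ) else -1) else 1)]
  apply Finset.prod_eq_zero (Finset.mem_univ i)
  simp

lemma prod_sgn_exp (m : ℕ) (a : Fin m → ℝ) (l : ℝ) :
    ∑ σ : Fin m → Bool, Real.exp (l * ∑ i, (if σ i then (1:ℝ) else -1) * a i)
      = ∏ i, (Real.exp (l * a i) + Real.exp (-(l * a i))) := by
  have h1 : ∀ σ : Fin m → Bool, Real.exp (l * ∑ i, (if σ i then (1:ℝ) else -1) * a i)
      = ∏ i, Real.exp ((if σ i then (1:ℝ) else -1) * (l * a i)) := by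
    intro σ
    rw [← Real.exp_sum, Finset.mul_sum]
    congr 1
    exact Finset.sum_congr rfl (fun i _ => by ring)
  simp_rw [h1]
  rw [sum_prod_bool m (fun j b => Real.exp ((if b then (1:ℝ) else -1) * (l * a j)))]
  congr 1; ext i; simp

set_option maxHeartbeats 1000000 in
lemma massart_aux (m : ℕ) (A : Finset (Fin m → ℝ)) (hA : A.Nonempty) :
    (∑ σ : Fin m → Bool,
        A.sup' hA (fun a => ∑ i, (if σ i then (1:ℝ) else -1) * a i)) / 2^m
      ≤ A.sup' hA (fun a => Real.sqrt (∑ i, (a i)^2)) *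
          Real.sqrt (2 * Real.log (A.card : ℝ)) := by
  obtain ⟨r, hr_def⟩ : ∃ x, x = A.sup' hA (fun a => Real.sqrt (∑ i, (a i) ^ 2)) :=
    ⟨_, rfl⟩
  obtain ⟨a₀, ha₀⟩ := id hA
  have hr0 : 0 ≤ r := by
    rw [hr_def]
    refine le_trans (Real.sqrt_nonneg (∑ i, (a₀ i)^2)) ?_
    apply Finset.le_sup' (f := fun a => Real.sqrt (∑ i, (a i) ^ 2)) (h := ha₀)
  obtain ⟨F, hF⟩ : ∃ F : (Fin m → Bool) → ℝ, ∀ σ,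
      F σ = A.sup' hA (fun a => ∑ i, (if σ i then (1:ℝ) else -1) * a i) :=
    ⟨_, fun _ => rfl⟩
  rw [← hr_def]
  simp_rw [← hF]
  rcases eq_or_lt_of_le hr0 with hr | hr
  · -- r = 0 : all vectors are zero
    have hz : ∀ a ∈ A, ∀ i, a i = 0 := by
      intro a ha i
      have h1 : Real.sqrt (∑ i, (a i)^2) ≤ 0 := by
        rw [hr, hr_def]
        apply Finset.le_sup' (f := fun a => Real.sqrt (∑ i, (a i) ^ 2)) (h := ha)
      have h2 : (∑ i, (a i)^2) ≤ 0 :=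
        Real.sqrt_eq_zero'.mp (le_antisymm h1 (Real.sqrt_nonneg _))
      have h3 : (∑ i, (a i)^2) = 0 :=
        le_antisymm h2 (Finset.sum_nonneg (fun i _ => sq_nonneg _))
      have := (Finset.sum_eq_zero_iff_of_nonneg (fun i _ => sq_nonneg (a i))).mp h3
        i (Finset.mem_univ i)
      exact pow_eq_zero_iff (by norm_num) |>.mp this
    have hF0 : ∀ σ, F σ = 0 := by
      intro σ
      rw [hF σ]
      rw [Finset.sup'_congr hA rfl (g := fun _ => (0:ℝ))
        (fun a ha => by simp [hz a ha])]
      exact Finset.sup'_const hA 0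
    simp only [hF0]
    simp
    positivity
  · -- 0 < r
    have hcard := Finset.card_pos.mpr hA
    rcases (by omega : A.card = 1 ∨ 2 ≤ A.card) with h1 | hn
    · obtain ⟨a, ha⟩ := Finset.card_eq_one.mp h1
      have hFa : ∀ σ, F σ = ∑ i, (if σ i then (1:ℝ) else -1) * a i := by
        intro σ; rw [hF σ]; simp [ha]
      have hsum : ∑ σ, F σ = 0 := by
        simp_rw [hFa]
        rw [Finset.sum_comm]
        apply Finset.sum_eq_zero
        intro i _
        rw [← Finset.sum_mul, sgn_sum_zero, zero_mul]
      rw [hsum, h1]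
      simp
    · set L := Real.log (A.card : ℝ) with hL
      have hL0 : 0 < L := Real.log_pos (by exact_mod_cast hn)
      set l := Real.sqrt (2*L) / r with hl
      have hs0 : 0 < Real.sqrt (2*L) := Real.sqrt_pos.mpr (by linarith)
      have hl0 : 0 < l := div_pos hs0 hr
      have hKa : ∀ a ∈ A,
          ∑ σ : Fin m → Bool, Real.exp (l * ∑ i, (if σ i then (1:ℝ) else -1) * a i)
            ≤ 2^m * Real.exp L := by
        intro a ha
        rw [prod_sgn_exp]
        have step1 : ∏ i, (Real.exp (l*a i) + Real.exp (-(l*a i)))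
            ≤ ∏ i, (2 * Real.exp ((l*a i)^2/2)) := by
          apply Finset.prod_le_prod
          · intro i _; positivity
          · intro i _
            have h := Real.cosh_le_exp_half_sq (l * a i)
            rw [Real.cosh_eq] at h
            linarith
        refine step1.trans ?_
        rw [Finset.prod_mul_distrib, Finset.prod_const, ← Real.exp_sum,
          Finset.card_univ, Fintype.card_fin]
        apply mul_le_mul_of_nonneg_left _ (by positivity)
        apply Real.exp_le_exp.mpr
        have hbound : ∑ i, (a i)^2 ≤ r^2 := by
          have h1 : Real.sqrt (∑ i, (a i)^2) ≤ r := by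
            rw [hr_def]
            apply Finset.le_sup' (f := fun a => Real.sqrt (∑ i, (a i) ^ 2)) (h := ha)
          have h2 : (0:ℝ) ≤ ∑ i, (a i)^2 := by positivity
          calc ∑ i, (a i)^2 = (Real.sqrt (∑ i, (a i)^2))^2 := (Real.sq_sqrt h2).symm
            _ ≤ r^2 := pow_le_pow_left₀ (Real.sqrt_nonneg _) h1 2
        have hl2 : l^2 * r^2 = 2*L := by
          rw [hl, div_pow, Real.sq_sqrt (by linarith : (0:ℝ) ≤ 2*L)]
          field_simp
        calc ∑ i, (l*a i)^2/2 = l^2 * (∑ i, (a i)^2)/2 := by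
              rw [Finset.mul_sum, Finset.sum_div]
              exact Finset.sum_congr rfl (fun i _ => by ring)
          _ ≤ l^2 * r^2 / 2 := by gcongr
          _ = L := by rw [hl2]; ring
      have hKσ : ∀ σ : Fin m → Bool, Real.exp (l * F σ)
          ≤ ∑ a ∈ A, Real.exp (l * ∑ i, (if σ i then (1:ℝ) else -1) * a i) := by
        intro σ
        have hmono : Monotone (fun x : ℝ => Real.exp (l * x)) :=
          fun x y h => Real.exp_le_exp.mpr (mul_le_mul_of_nonneg_left h hl0.le)
        rw [hF σ]
        rw [Finset.comp_sup'_eq_sup'_comp hA (fun x => Real.exp (l * x))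
          (fun x y => hmono.map_max)]
        apply Finset.sup'_le
        intro a ha
        simp only [Function.comp_apply]
        apply Finset.single_le_sum
          (f := fun a => Real.exp (l * ∑ i, (if σ i then (1:ℝ) else -1) * a i))
          (fun b _ => (Real.exp_pos _).le) ha
      have hK : ∑ σ, Real.exp (l * F σ) ≤ 2^m * Real.exp (2*L) := by
        calc ∑ σ, Real.exp (l * F σ)
            ≤ ∑ σ : Fin m → Bool, ∑ a ∈ A,
                Real.exp (l * ∑ i, (if σ i then (1:ℝ) else -1) * a i) :=
              Finset.sum_le_sum (fun σ _ => hKσ σ)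
          _ = ∑ a ∈ A, ∑ σ : Fin m → Bool,
                Real.exp (l * ∑ i, (if σ i then (1:ℝ) else -1) * a i) :=
              Finset.sum_comm
          _ ≤ ∑ _a ∈ A, 2^m * Real.exp L := Finset.sum_le_sum hKa
          _ = A.card * (2^m * Real.exp L) := by
              rw [Finset.sum_const, nsmul_eq_mul]
          _ = 2^m * Real.exp (2*L) := by
              rw [two_mul, Real.exp_add,
                show ((A.card : ℝ)) = Real.exp L from
                  (Real.exp_log (by exact_mod_cast hcard)).symm]
              ring
      have hw : ∑ _σ : Fin m → Bool, ((2:ℝ)^m)⁻¹ = 1 := by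
        rw [Finset.sum_const, Finset.card_univ, Fintype.card_fun]
        simp [nsmul_eq_mul]
      have hJ : Real.exp (l * ((∑ σ, F σ)/2^m)) ≤ (∑ σ, Real.exp (l * F σ))/2^m := by
        have hje := convexOn_exp.map_sum_le (t := Finset.univ)
          (w := fun _ : Fin m → Bool => ((2:ℝ)^m)⁻¹) (p := fun σ => l * F σ)
          (fun _ _ => by positivity) hw (fun _ _ => Set.mem_univ _)
        simp only [smul_eq_mul] at hje
        calc Real.exp (l * ((∑ σ, F σ)/2^m))
            = Real.exp (∑ σ, ((2:ℝ)^m)⁻¹ * (l * F σ)) := by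
              congr 1
              rw [← Finset.mul_sum, ← Finset.mul_sum]
              field_simp
          _ ≤ ∑ σ, ((2:ℝ)^m)⁻¹ * Real.exp (l * F σ) := hje
          _ = (∑ σ, Real.exp (l*F σ))/2^m := by
              rw [← Finset.mul_sum, inv_mul_eq_div]
      have hfinal : l * ((∑ σ, F σ)/2^m) ≤ 2*L := by
        apply Real.exp_le_exp.mp
        refine hJ.trans ?_
        rw [div_le_iff₀ (by positivity)]
        calc ∑ σ, Real.exp (l * F σ) ≤ 2^m * Real.exp (2*L) := hK
          _ = Real.exp (2*L) * 2^m := by ring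
      have hT : (∑ σ, F σ)/2^m ≤ 2*L/l := by
        rw [le_div_iff₀ hl0]
        linarith [hfinal]
      refine hT.trans_eq ?_
      have h2L : Real.sqrt (2*L) * Real.sqrt (2*L) = 2*L :=
        Real.mul_self_sqrt (by linarith)
      rw [hl, div_div_eq_mul_div, div_eq_iff (ne_of_gt hs0)]
      linear_combination (-r) * h2L

set_option maxHeartbeats 1000000 in
theorem massart_finite_class_lemma (m : ℕ) (hm : 0 < m)
    (A : Finset (Fin m → ℝ)) (hA : A.Nonempty) :
    (∑ σ : Fin m → Bool,
        A.sup' hA (fun a => (1 / (m : ℝ)) * ∑ i, (if σ i then (1 : ℝ) else -1) * a i))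
      / 2 ^ m ≤
    A.sup' hA (fun a => Real.sqrt (∑ i, (a i) ^ 2)) *
      Real.sqrt (2 * Real.log (A.card : ℝ)) / m := by
  have hm' : (0:ℝ) < m := Nat.cast_pos.mpr hm
  have key := massart_aux m A hA
  have hsup : ∀ σ : Fin m → Bool,
      A.sup' hA (fun a => (1/(m:ℝ)) * ∑ i, (if σ i then (1:ℝ) else -1) * a i)
        = (1/(m:ℝ)) * A.sup' hA (fun a => ∑ i, (if σ i then (1:ℝ) else -1) * a i) := by
    intro σ
    have hmono : Monotone (fun x : ℝ => (1/(m:ℝ)) * x) :=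
      fun x y h => mul_le_mul_of_nonneg_left h (by positivity)
    exact (Finset.comp_sup'_eq_sup'_comp hA (fun x => (1/(m:ℝ)) * x)
      (fun x y => hmono.map_max)).symm
  simp_rw [hsup]
  rw [← Finset.mul_sum, mul_div_assoc]
  calc 1/(m:ℝ) * ((∑ σ : Fin m → Bool,
        A.sup' hA (fun a => ∑ i, (if σ i then (1:ℝ) else -1) * a i))/2^m)
      ≤ 1/(m:ℝ) * (A.sup' hA (fun a => Real.sqrt (∑ i, (a i)^2)) *
          Real.sqrt (2*Real.log (A.card : ℝ))) :=
        mul_le_mul_of_nonneg_left key (by positivity)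
    _ = A.sup' hA (fun a => Real.sqrt (∑ i, (a i)^2)) *
          Real.sqrt (2*Real.log (A.card : ℝ)) / m := by ring
end

section
/- Let L : V × Y → [0,B] be a (λ,θ)-self-bounding Lipschitz loss with λ > 0 and θ ∈ [0,1/2], with respect to the sup-norm on V ⊆ ℝ^q. Let f₀, f₁ : X → V and (x₁,y₁),…,(x_n,y_n) ∈ X × Y, and suppose the empirical risks satisfy (1/n)∑_i L(f₀(x_i),y_i) ≤ r and (1/n)∑_i L(f₁(x_i),y_i) ≤ r for some r > 0. Then √((1/n)∑_{i=1}^{n} (L(f₀(x_i),y_i) − L(f₁(x_i),y_i))²) ≤ 2^θ·λ·r^θ·max_{i∈[n], j∈[q]} |π_j(f₀(x_i)) − π_j(f₁(x_i))|. -/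
/-!
Pointwise, the self-bounding Lipschitz property gives
`(L₀ᵢ - L₁ᵢ)² ≤ λ² M² mᵢ^{2θ}` with `mᵢ = max L₀ᵢ L₁ᵢ` and `M` the sup-distance of the predictions.
Since `2θ ≤ 1`, the map `z ↦ z^{2θ}` is concave, so by Jensen the mean of `mᵢ^{2θ}` is at most
`(mean mᵢ)^{2θ}`, and `mean mᵢ ≤ mean L₀ᵢ + mean L₁ᵢ ≤ 2r`.
-/

open Finset

lemma norm_le_iSup_abs {ι : Type*} [Fintype ι] (u : ι → ℝ) : ‖u‖ ≤ ⨆ j, |u j| :=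
  (pi_norm_le_iff_of_nonneg (Real.iSup_nonneg fun j => abs_nonneg (u j))).2
    fun j => (Real.norm_eq_abs _).trans_le
      (le_ciSup (f := fun j => |u j|) (Set.finite_range _).bddAbove j)

lemma mean_rpow_le_rpow_mean {ι : Type*} [Fintype ι] {f : ι → ℝ} {p : ℝ}
    (hf : ∀ i, 0 ≤ f i) (hp₀ : 0 ≤ p) (hp₁ : p ≤ 1) :
    1 / (Fintype.card ι : ℝ) * ∑ i, f i ^ p ≤ (1 / (Fintype.card ι : ℝ) * ∑ i, f i) ^ p := by
  rcases isEmpty_or_nonempty ι with hι | hι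
  · simpa using Real.rpow_nonneg le_rfl p
  · have hw : ∑ _i : ι, 1 / (Fintype.card ι : ℝ) = 1 := by simp
    simpa [Finset.mul_sum] using (Real.concaveOn_rpow hp₀ hp₁).le_map_sum
      (t := univ) (w := fun _ => 1 / (Fintype.card ι : ℝ)) (p := f)
      (fun _ _ => by positivity) hw (fun i _ => Set.mem_Ici.2 (hf i))

lemma sqrt_mean_sq_sub_le_of_abs_sub_le {ι : Type*} [Fintype ι] {a b : ι → ℝ} {K θ r : ℝ}
    (ha : ∀ i, 0 ≤ a i) (hb : ∀ i, 0 ≤ b i) (hK : 0 ≤ K) (hθ₀ : 0 ≤ θ) (hθ₁ : θ ≤ 1 / 2)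
    (hr : 0 ≤ r) (hab : ∀ i, |a i - b i| ≤ K * max (a i) (b i) ^ θ)
    (ha_mean : 1 / (Fintype.card ι : ℝ) * ∑ i, a i ≤ r)
    (hb_mean : 1 / (Fintype.card ι : ℝ) * ∑ i, b i ≤ r) :
    √(1 / (Fintype.card ι : ℝ) * ∑ i, (a i - b i) ^ 2) ≤ 2 ^ θ * K * r ^ θ := by
  set c : ℝ := 1 / (Fintype.card ι : ℝ)
  set m : ι → ℝ := fun i => max (a i) (b i)
  have hm : ∀ i, 0 ≤ m i := fun i => (ha i).trans (le_max_left _ _)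
  have hpoint : ∀ i, (a i - b i) ^ 2 ≤ K ^ 2 * m i ^ (2 * θ) := fun i => by
    rw [mul_comm 2 θ, Real.rpow_mul (hm i), Real.rpow_two, ← mul_pow, ← sq_abs]
    exact pow_le_pow_left₀ (abs_nonneg _) (hab i) 2
  have hmean_m : c * ∑ i, m i ≤ 2 * r :=
    calc c * ∑ i, m i ≤ c * ∑ i, (a i + b i) := by
          gcongr with i; exact max_le_add_of_nonneg (ha i) (hb i)
      _ = c * ∑ i, a i + c * ∑ i, b i := by rw [sum_add_distrib, mul_add]
      _ ≤ 2 * r := by linarith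
  rw [Real.sqrt_le_left (by positivity)]
  calc c * ∑ i, (a i - b i) ^ 2 ≤ c * ∑ i, K ^ 2 * m i ^ (2 * θ) := by
        gcongr with i; exact hpoint i
    _ = K ^ 2 * (c * ∑ i, m i ^ (2 * θ)) := by rw [← mul_sum]; ring
    _ ≤ K ^ 2 * (c * ∑ i, m i) ^ (2 * θ) := by
        gcongr; exact mean_rpow_le_rpow_mean hm (by positivity) (by linarith)
    _ ≤ K ^ 2 * (2 * r) ^ (2 * θ) := by
        gcongr
        exact mul_nonneg (by positivity) (sum_nonneg fun i _ => hm i)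
    _ = (2 ^ θ * K * r ^ θ) ^ 2 := by
        rw [mul_comm 2 θ, Real.rpow_mul (by positivity), Real.rpow_two, Real.mul_rpow zero_le_two hr]
        ring

theorem empirical_l2_distance_bound_general
    {X Y : Type*} (q n : ℕ)
    (L : (Fin q → ℝ) → Y → ℝ) (B : ℝ)
    (hLbounds : ∀ u y, L u y ∈ Set.Icc (0 : ℝ) B)
    (lam θ : ℝ) (hlam : 0 < lam) (hθ0 : 0 ≤ θ) (hθ1 : θ ≤ 1 / 2)
    (hSBL : ∀ (y : Y) (u v : Fin q → ℝ),
      |L u y - L v y| ≤ lam * max (L u y) (L v y) ^ θ * ‖u - v‖)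
    (f₀ f₁ : X → Fin q → ℝ) (x : Fin n → X) (y : Fin n → Y) (r : ℝ) (hr : 0 < r)
    (h₀ : (1 / (n : ℝ)) * ∑ i, L (f₀ (x i)) (y i) ≤ r)
    (h₁ : (1 / (n : ℝ)) * ∑ i, L (f₁ (x i)) (y i) ≤ r) :
    Real.sqrt ((1 / (n : ℝ)) * ∑ i, (L (f₀ (x i)) (y i) - L (f₁ (x i)) (y i)) ^ 2) ≤
      2 ^ θ * lam * r ^ θ *
        ⨆ i : Fin n, ⨆ j : Fin q, |f₀ (x i) j - f₁ (x i) j| := by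
  set M := ⨆ i : Fin n, ⨆ j : Fin q, |f₀ (x i) j - f₁ (x i) j|
  have hM : 0 ≤ M := Real.iSup_nonneg fun i => Real.iSup_nonneg fun j => abs_nonneg _
  have hdist : ∀ i, ‖f₀ (x i) - f₁ (x i)‖ ≤ M := fun i =>
    (norm_le_iSup_abs _).trans
      (le_ciSup (f := fun i => ⨆ j, |f₀ (x i) j - f₁ (x i) j|) (Set.finite_range _).bddAbove i)
  have hL : ∀ i, |L (f₀ (x i)) (y i) - L (f₁ (x i)) (y i)| ≤
      lam * M * max (L (f₀ (x i)) (y i)) (L (f₁ (x i)) (y i)) ^ θ := fun i => by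
    rw [mul_right_comm]
    have hmax := (hLbounds (f₀ (x i)) (y i)).1.trans (le_max_left _ (L (f₁ (x i)) (y i)))
    exact (hSBL _ _ _).trans
      (mul_le_mul_of_nonneg_left (hdist i) (mul_nonneg hlam.le (Real.rpow_nonneg hmax θ)))
  have hbound := sqrt_mean_sq_sub_le_of_abs_sub_le (fun i => (hLbounds _ _).1)
    (fun i => (hLbounds _ _).1) (by positivity) hθ0 hθ1 hr.le hL
    (by simpa using h₀) (by simpa using h₁)
  rw [Fintype.card_fin] at hbound
  exact hbound.trans_eq (by ring)

theorem empirical_l2_distance_bound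
    {X Y : Type*} (q n : ℕ) [NeZero q] [NeZero n]
    (L : (Fin q → ℝ) → Y → ℝ) (B : ℝ) (hB : 0 < B)
    (hLbounds : ∀ u y, L u y ∈ Set.Icc (0 : ℝ) B)
    (lam θ : ℝ) (hlam : 0 < lam) (hθ0 : 0 ≤ θ) (hθ1 : θ ≤ 1 / 2)
    (hSBL : ∀ (y : Y) (u v : Fin q → ℝ),
      |L u y - L v y| ≤ lam * max (L u y) (L v y) ^ θ * ‖u - v‖)
    (f₀ f₁ : X → Fin q → ℝ) (x : Fin n → X) (y : Fin n → Y) (r : ℝ) (hr : 0 < r)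
    (h₀ : (1 / (n : ℝ)) * ∑ i, L (f₀ (x i)) (y i) ≤ r)
    (h₁ : (1 / (n : ℝ)) * ∑ i, L (f₁ (x i)) (y i) ≤ r) :
    Real.sqrt ((1 / (n : ℝ)) * ∑ i, (L (f₀ (x i)) (y i) - L (f₁ (x i)) (y i)) ^ 2) ≤
      2 ^ θ * lam * r ^ θ *
        ⨆ i : Fin n, ⨆ j : Fin q, |f₀ (x i) j - f₁ (x i) j| :=
  empirical_l2_distance_bound_general q n L B hLbounds lam θ hlam hθ0 hθ1 hSBL f₀ f₁ x y r hr h₀ h₁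
end

section
/- Let L(u,y) = ∑_{l=1}^{q} y_l·log(∑_{j=1}^{q} exp(u_j − u_l)) be the pick-all-labels loss on ℝ^q × S(k), where S(k) is the set of k-sparse binary vectors in {0,1}^q. Then L is (2√k, 1/2)-self-bounding Lipschitz with respect to the sup-norm: for all u, v ∈ ℝ^q and y ∈ S(k), |L(u,y) − L(v,y)| ≤ 2√k·max{L(u,y), L(v,y)}^{1/2}·‖u − v‖_∞. -/
/-!
Write `A_l(u) = ∑_j exp (u_j - u_l) ≥ 1`, so that `L(u, y) = ∑_l y_l log A_l(u)`. If `‖u - v‖_∞ ≤ d`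
then every off-diagonal term of `A_l(v)` is at least `e^{-2d}` times the corresponding term of
`A_l(u)`, and convexity of `exp` turns this into `log A_l(u) - log A_l(v) ≤ 2d (1 - 1/A_l(u))`.
Since `1 - 1/A ≤ min (1, log A) ≤ √(log A)`, each label costs at most `2d √(log A_l(u))`, and
Cauchy–Schwarz over the at most `k` active labels gives `L(u, y) - L(v, y) ≤ 2d √k √(L(u, y))`.
-/

open Real Finset

namespace Real

lemma one_sub_inv_le_sqrt_log {A : ℝ} (hA : 1 ≤ A) : 1 - A⁻¹ ≤ √(log A) := by
  have h0 : 0 ≤ 1 - A⁻¹ := sub_nonneg.2 (inv_le_one_of_one_le₀ hA)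
  have h1 : 1 - A⁻¹ ≤ 1 := sub_le_self _ (inv_nonneg.2 (by linarith))
  have hlog : 1 - A⁻¹ ≤ log A := one_sub_inv_le_log_of_pos (by linarith)
  exact le_sqrt_of_sq_le (by nlinarith)

lemma log_sub_log_le_mul_one_sub_inv {A B c : ℝ} (hA : 1 ≤ A)
    (hB : 1 + exp (-c) * (A - 1) ≤ B) : log A - log B ≤ c * (1 - A⁻¹) := by
  have hA0 : 0 < A := by linarith
  have hconv : exp ((1 - A⁻¹) * -c) ≤ A⁻¹ + (1 - A⁻¹) * exp (-c) := by
    simpa using convexOn_exp.2 (Set.mem_univ 0) (Set.mem_univ (-c)) (inv_nonneg.2 hA0.le)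
      (sub_nonneg.2 (inv_le_one_of_one_le₀ hA)) (by ring)
  have hle : A * exp ((1 - A⁻¹) * -c) ≤ B := calc
    _ ≤ A * (A⁻¹ + (1 - A⁻¹) * exp (-c)) := by gcongr
    _ = 1 + exp (-c) * (A - 1) := by field_simp
    _ ≤ B := hB
  have hlog := log_le_log (by positivity) hle
  rw [log_mul hA0.ne' (exp_pos _).ne', log_exp] at hlog
  linarith

lemma sum_mul_sqrt_le_sqrt_mul_sqrt {ι : Type*} (s : Finset ι) {y a : ι → ℝ}
    (hy : ∀ i, 0 ≤ y i) (ha : ∀ i, 0 ≤ a i) :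
    ∑ i ∈ s, y i * √(a i) ≤ √(∑ i ∈ s, y i) * √(∑ i ∈ s, y i * a i) := by
  have hsplit : ∀ i, y i * √(a i) = √(y i) * √(y i * a i) := fun i => by
    rw [sqrt_mul (hy i), ← mul_assoc, mul_self_sqrt (hy i)]
  simpa only [hsplit] using sum_sqrt_mul_sqrt_le s hy fun i => mul_nonneg (hy i) (ha i)

end Real

section PickAllLabels

variable {ι : Type*} [Fintype ι] (u v y : ι → ℝ)

lemma one_le_sum_exp_sub (l : ι) : 1 ≤ ∑ j, exp (u j - u l) := by
  simpa using single_le_sum (f := fun j => exp (u j - u l)) (fun j _ => (exp_pos _).le)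
    (mem_univ l)

lemma one_add_exp_mul_sub_one_le_sum_exp_sub (l : ι) :
    1 + exp (-(2 * ‖u - v‖)) * (∑ j, exp (u j - u l) - 1) ≤ ∑ j, exp (v j - v l) := by
  classical
  have hcoord : ∀ j, |u j - v j| ≤ ‖u - v‖ := fun j => by
    simpa using norm_le_pi_norm (u - v) j
  have hterm : ∀ j, exp (-(2 * ‖u - v‖)) * exp (u j - u l) ≤ exp (v j - v l) := fun j => by
    rw [← exp_add, exp_le_exp]
    linarith [abs_le.1 (hcoord j), abs_le.1 (hcoord l)]
  have hsplit : ∀ w : ι → ℝ, ∑ j, exp (w j - w l) = 1 + ∑ j ∈ univ.erase l, exp (w j - w l) :=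
    fun w => by rw [← add_sum_erase _ _ (mem_univ l), sub_self, exp_zero]
  have hoff := sum_le_sum fun j (_ : j ∈ univ.erase l) => hterm j
  rw [← mul_sum] at hoff
  rw [hsplit u, hsplit v, add_sub_cancel_left]
  linarith

lemma log_sum_exp_sub_sub_log_sum_exp_sub_le (l : ι) :
    log (∑ j, exp (u j - u l)) - log (∑ j, exp (v j - v l)) ≤
      2 * ‖u - v‖ * √(log (∑ j, exp (u j - u l))) := calc
  _ ≤ 2 * ‖u - v‖ * (1 - (∑ j, exp (u j - u l))⁻¹) :=
    log_sub_log_le_mul_one_sub_inv (one_le_sum_exp_sub u l)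
      (one_add_exp_mul_sub_one_le_sum_exp_sub u v l)
  _ ≤ _ := by gcongr; exact one_sub_inv_le_sqrt_log (one_le_sum_exp_sub u l)

noncomputable def pickAllLabelsLoss (u y : ι → ℝ) : ℝ := ∑ l, y l * log (∑ j, exp (u j - u l))

variable {y}

lemma pickAllLabelsLoss_sub_le (hy : 0 ≤ y) :
    pickAllLabelsLoss u y - pickAllLabelsLoss v y ≤
      2 * √(∑ l, y l) * √(pickAllLabelsLoss u y) * ‖u - v‖ := calc
  _ = ∑ l, y l * (log (∑ j, exp (u j - u l)) - log (∑ j, exp (v j - v l))) := by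
    simp only [pickAllLabelsLoss, mul_sub, sum_sub_distrib]
  _ ≤ ∑ l, y l * (2 * ‖u - v‖ * √(log (∑ j, exp (u j - u l)))) := by
    gcongr with l
    · exact hy l
    · exact log_sum_exp_sub_sub_log_sum_exp_sub_le u v l
  _ = 2 * ‖u - v‖ * ∑ l, y l * √(log (∑ j, exp (u j - u l))) := by
    rw [mul_sum]; congr 1; ext l; ring
  _ ≤ 2 * ‖u - v‖ * (√(∑ l, y l) * √(pickAllLabelsLoss u y)) := by
    gcongr
    exact sum_mul_sqrt_le_sqrt_mul_sqrt _ hy fun l => log_nonneg (one_le_sum_exp_sub u l)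
  _ = _ := by ring

lemma abs_pickAllLabelsLoss_sub_le (hy : 0 ≤ y) :
    |pickAllLabelsLoss u y - pickAllLabelsLoss v y| ≤
      2 * √(∑ l, y l) * √(max (pickAllLabelsLoss u y) (pickAllLabelsLoss v y)) * ‖u - v‖ := by
  rw [abs_sub_le_iff]
  constructor
  · refine (pickAllLabelsLoss_sub_le u v hy).trans ?_
    gcongr
    exact le_max_left _ _
  · refine (pickAllLabelsLoss_sub_le v u hy).trans ?_
    rw [norm_sub_rev]
    gcongr
    exact le_max_right _ _

end PickAllLabels

theorem pick_all_labels_self_bounding_lipschitz_general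
    (q k : ℕ)
    (L : (Fin q → ℝ) → (Fin q → ℝ) → ℝ)
    (hL : ∀ u y, L u y = ∑ l, y l * Real.log (∑ j, Real.exp (u j - u l)))
    (u v : Fin q → ℝ) (y : Fin q → ℝ)
    (hy01 : ∀ j, y j = 0 ∨ y j = 1) (hysparse : ∑ j, y j ≤ (k : ℝ)) :
    |L u y - L v y| ≤
      2 * Real.sqrt k * max (L u y) (L v y) ^ ((1 : ℝ) / 2) * ‖u - v‖ := by
  obtain rfl : L = pickAllLabelsLoss := funext fun u => funext fun y => hL u y
  have hy : 0 ≤ y := fun j => by rcases hy01 j with h | h <;> simp [h]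
  rw [← sqrt_eq_rpow]
  calc _ ≤ 2 * √(∑ j, y j) * √(max (pickAllLabelsLoss u y) (pickAllLabelsLoss v y)) * ‖u - v‖ :=
        abs_pickAllLabelsLoss_sub_le u v hy
    _ ≤ _ := by gcongr

theorem pick_all_labels_self_bounding_lipschitz
    (q k : ℕ) (hq : 0 < q) (hk : 0 < k) (hkq : k ≤ q)
    (L : (Fin q → ℝ) → (Fin q → ℝ) → ℝ)
    (hL : ∀ u y, L u y = ∑ l, y l * Real.log (∑ j, Real.exp (u j - u l)))
    (u v : Fin q → ℝ) (y : Fin q → ℝ)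
    (hy01 : ∀ j, y j = 0 ∨ y j = 1) (hysparse : ∑ j, y j ≤ (k : ℝ)) :
    |L u y - L v y| ≤
      2 * Real.sqrt k * max (L u y) (L v y) ^ ((1 : ℝ) / 2) * ‖u - v‖ :=
  pick_all_labels_self_bounding_lipschitz_general q k L hL u v y hy01 hysparse
end
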